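/- If each port alphabet has at most one event, then for FSMs N and M, N ⊑_s M if and only if the Parikh image of L(N) is a subset of the Parikh image of L(M). -/

import Mathlib

def proj {Act P : Type} [DecidableEq P] (port : Act → P) (p : P) (σ : List Act) : List Act :=
  σ.filter (fun a => port a = p)

/-- The Parikh image of a trace: the number of occurrences of each event. -/
def parikh {Act : Type} [DecidableEq Act] (σ : List Act) : Act → ℕ :=
  fun a => σ.count a

/-! Two traces with the same per-port projections always have the same Parikh image. Conversely,
equal Parikh images make the traces permutations of each other, so their projections are
permutations of each other; when `port` is injective each projection consists of copies of a
single event, and permutations of such a list are equal to it. -/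

section

variable {Act P : Type} [DecidableEq P]

theorem pairwise_port_eq_proj (port : Act → P) (p : P) (σ : List Act) :
    (proj port p σ).Pairwise (fun a b => port a = port b) :=
  List.pairwise_filter.2 <| List.pairwise_of_forall fun _ _ ha hb => by simp_all

theorem List.Perm.proj_eq {port : Act → P} (hport : Function.Injective port) {σ τ : List Act}
    (h : σ.Perm τ) (p : P) : proj port p σ = proj port p τ :=
  (h.filter _).eq_of_pairwise (fun _ _ _ _ hab _ => hport hab)
    (pairwise_port_eq_proj port p σ) (pairwise_port_eq_proj port p τ)

variable [DecidableEq Act]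

theorem parikh_eq_iff_perm {σ τ : List Act} : parikh σ = parikh τ ↔ σ.Perm τ := by
  rw [List.perm_iff_count, funext_iff]
  rfl

theorem count_proj_port (port : Act → P) (a : Act) (σ : List Act) :
    (proj port (port a) σ).count a = σ.count a :=
  List.count_filter (by simp)

theorem parikh_eq_of_proj_eq (port : Act → P) {σ τ : List Act}
    (h : ∀ p, proj port p σ = proj port p τ) : parikh σ = parikh τ := by
  funext a
  rw [parikh, parikh, ← count_proj_port port a σ, ← count_proj_port port a τ, h]

theorem proj_eq_iff_parikh_eq {port : Act → P} (hport : Function.Injective port)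
    {σ τ : List Act} : (∀ p, proj port p σ = proj port p τ) ↔ parikh σ = parikh τ :=
  ⟨parikh_eq_of_proj_eq port, fun h => (parikh_eq_iff_perm.1 h).proj_eq hport⟩

end

/-- if each port's alphabet has at most one event then `N ⊑_s M`
iff the Parikh image of `L(N)` is contained in the Parikh image of `L(M)`. -/
theorem strong_conf_iff_parikh_subset {Act P : Type} [DecidableEq Act] [DecidableEq P]
    (port : Act → P) (hsingle : ∀ a b : Act, port a = port b → a = b)
    (LN LM : Set (List Act)) :
    (∀ σ ∈ LN, ∃ σ' ∈ LM, ∀ p : P, proj port p σ = proj port p σ') ↔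
      parikh '' LN ⊆ parikh '' LM := by
  simp_rw [proj_eq_iff_parikh_eq hsingle, Set.image_subset_iff]
  exact forall₂_congr fun σ _ => by simp only [Set.mem_preimage, Set.mem_image, eq_comm]
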